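/- arXiv:1508.03444 — 3 statements merged into one kernel-verified Lean document; each statement's English description precedes it below -/
import Mathlib

section
/- Let M = M₁ ×_{f₁,f₂} M₂ be a doubly warped product. If ζ₁ is Killing on M₁, ζ₂ is Killing on M₂, and ζᵢ(fᵢ) = ρ fᵢ for each i = 1,2 for a common smooth function ρ, then ζ = ζ₁ + ζ₂ is a conformal vector field on M with conformal factor 2ρ. -/
noncomputable section

open scoped BigOperators

/-- The model space of an `n`-dimensional manifold (global chart). -/
abbrev E (n : ℕ) := Fin n → ℝ

section Core
variable {α : Type*} [NormedAddCommGroup α] [NormedSpace ℝ α]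

/-- Directional derivative `X(φ)` of a scalar function along a vector field. -/
def dd (X : α → α) (φ : α → ℝ) (p : α) : ℝ := fderiv ℝ φ p (X p)

/-- Lie bracket `[X,Y]` of vector fields. -/
def br (X Y : α → α) (p : α) : α := fderiv ℝ Y p (X p) - fderiv ℝ X p (Y p)

/-- Lie derivative of a metric: `(L_ζ g)(X,Y)(p)`. -/
def lieD (g : α → α → α → ℝ) (ζ X Y : α → α) (p : α) : ℝ :=
  dd ζ (fun q => g q (X q) (Y q)) p - g p (br ζ X p) (Y p) - g p (X p) (br ζ Y p)

/-- `g` is a smooth field of symmetric bilinear forms. -/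
structure IsMetric (g : α → α → α → ℝ) : Prop where
  linL : ∀ p w, IsLinearMap ℝ (fun v => g p v w)
  linR : ∀ p v, IsLinearMap ℝ (g p v)
  symm : ∀ p v w, g p v w = g p w v
  smooth : ∀ v w, ContDiff ℝ (⊤ : ℕ∞) (fun p => g p v w)

/-- Positive definiteness (Riemannian metric). -/
def PosDef (g : α → α → α → ℝ) : Prop := ∀ p v, v ≠ 0 → 0 < g p v v

/-- `ζ` is a conformal vector field for `g` with conformal factor `ρ`. -/
def IsConformal (g : α → α → α → ℝ) (ζ : α → α) (ρ : α → ℝ) : Prop :=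
  ∀ X Y : α → α, ContDiff ℝ (⊤ : ℕ∞) X → ContDiff ℝ (⊤ : ℕ∞) Y → ∀ p,
    lieD g ζ X Y p = ρ p * g p (X p) (Y p)

/-- Conformality restricted to a subset. -/
def IsConformalOn (g : α → α → α → ℝ) (ζ : α → α) (ρ : α → ℝ) (S : Set α) : Prop :=
  ∀ X Y : α → α, ContDiff ℝ (⊤ : ℕ∞) X → ContDiff ℝ (⊤ : ℕ∞) Y → ∀ p ∈ S,
    lieD g ζ X Y p = ρ p * g p (X p) (Y p)

/-- `ζ` is a Killing vector field for `g`. -/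
def IsKilling (g : α → α → α → ℝ) (ζ : α → α) : Prop := IsConformal g ζ (fun _ => 0)

/-- Koszul characterization of the Levi-Civita connection of `g`. -/
def IsLC (g : α → α → α → ℝ) (D : (α → α) → (α → α) → (α → α)) : Prop :=
  ∀ X Y Z : α → α, ContDiff ℝ (⊤ : ℕ∞) X → ContDiff ℝ (⊤ : ℕ∞) Y → ContDiff ℝ (⊤ : ℕ∞) Z → ∀ p,
    2 * g p (D X Y p) (Z p) =
      dd X (fun q => g q (Y q) (Z q)) p + dd Y (fun q => g q (X q) (Z q)) p
        - dd Z (fun q => g q (X q) (Y q)) p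
        + g p (br X Y p) (Z p) - g p (br X Z p) (Y p) - g p (br Y Z p) (X p)

/-- Koszul characterization of the Levi-Civita connection, restricted to a subset. -/
def IsLCOn (g : α → α → α → ℝ) (D : (α → α) → (α → α) → (α → α)) (S : Set α) : Prop :=
  ∀ X Y Z : α → α, ContDiff ℝ (⊤ : ℕ∞) X → ContDiff ℝ (⊤ : ℕ∞) Y → ContDiff ℝ (⊤ : ℕ∞) Z → ∀ p ∈ S,
    2 * g p (D X Y p) (Z p) =
      dd X (fun q => g q (Y q) (Z q)) p + dd Y (fun q => g q (X q) (Z q)) p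
        - dd Z (fun q => g q (X q) (Y q)) p
        + g p (br X Y p) (Z p) - g p (br X Z p) (Y p) - g p (br Y Z p) (X p)

end Core

section Warped
variable {n₁ n₂ : ℕ}

/-- The doubly warped product metric `g = f₂² g₁ ⊕ f₁² g₂` on `M₁ × M₂`. -/
def dwg (g₁ : E n₁ → E n₁ → E n₁ → ℝ) (g₂ : E n₂ → E n₂ → E n₂ → ℝ)
    (f₁ : E n₁ → ℝ) (f₂ : E n₂ → ℝ) :
    (E n₁ × E n₂) → (E n₁ × E n₂) → (E n₁ × E n₂) → ℝ :=
  fun p v w => (f₂ p.2)^2 * g₁ p.1 v.1 w.1 + (f₁ p.1)^2 * g₂ p.2 v.2 w.2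

/-- Lift of a vector field on `M₁` to the product. -/
def lift1 (ζ₁ : E n₁ → E n₁) : (E n₁ × E n₂) → (E n₁ × E n₂) := fun p => (ζ₁ p.1, 0)

/-- Lift of a vector field on `M₂` to the product. -/
def lift2 (ζ₂ : E n₂ → E n₂) : (E n₁ × E n₂) → (E n₁ × E n₂) := fun p => (0, ζ₂ p.2)

/-- The sum `ζ₁ + ζ₂` of lifted vector fields. -/
def sumVF (ζ₁ : E n₁ → E n₁) (ζ₂ : E n₂ → E n₂) : (E n₁ × E n₂) → (E n₁ × E n₂) :=
  fun p => (ζ₁ p.1, ζ₂ p.2)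

end Warped

lemma lin_expand {n : ℕ} {f : E n → ℝ} (hf : IsLinearMap ℝ f) (v : E n) :
    f v = ∑ i, v i * f (Pi.single i 1) := by
  have hv : v = ∑ i, (v i) • (Pi.single i 1 : E n) := by
    funext k
    simp [Finset.sum_apply, Pi.single_apply]
  conv_lhs => rw [hv]
  rw [show f = (IsLinearMap.mk' f hf : E n →ₗ[ℝ] ℝ) from rfl, map_sum]
  simp [smul_eq_mul]

lemma metric_expand {n : ℕ} {g : E n → E n → E n → ℝ} (hg : IsMetric g) (p v w : E n) :
    g p v w = ∑ i, ∑ j, v i * w j * g p (Pi.single i 1) (Pi.single j 1) := by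
  rw [lin_expand (hg.linL p w)]
  refine Finset.sum_congr rfl fun i _ => ?_
  rw [lin_expand (hg.linR p (Pi.single i 1)), Finset.mul_sum]
  refine Finset.sum_congr rfl fun j _ => ?_
  ring

lemma frozen_hasFDerivAt {n : ℕ} {g : E n → E n → E n → ℝ} (hg : IsMetric g)
    (u v x : E n) :
    HasFDerivAt (fun y => g y u v)
      (∑ i, ∑ j, (u i * v j) •
        fderiv ℝ (fun y => g y (Pi.single i 1) (Pi.single j 1)) x) x := by
  have h : (fun y => g y u v)
      = fun y => ∑ i, ∑ j, u i * v j * g y (Pi.single i 1) (Pi.single j 1) :=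
    funext fun y => metric_expand hg y u v
  rw [h]
  exact HasFDerivAt.fun_sum fun i _ => HasFDerivAt.fun_sum fun j _ =>
    (((hg.smooth _ _).differentiable (by simp) x).hasFDerivAt).const_mul _

lemma metric_hasFDerivAt {n : ℕ} {g : E n → E n → E n → ℝ} (hg : IsMetric g)
    {β : Type*} [NormedAddCommGroup β] [NormedSpace ℝ β]
    {a u v : β → E n} {a' u' v' : β →L[ℝ] E n} {p : β}
    (ha : HasFDerivAt a a' p) (hu : HasFDerivAt u u' p) (hv : HasFDerivAt v v' p) :
    HasFDerivAt (fun q => g (a q) (u q) (v q))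
      ((fderiv ℝ (fun x => g x (u p) (v p)) (a p)).comp a'
        + (LinearMap.toContinuousLinearMap
            (IsLinearMap.mk' _ (hg.linL (a p) (v p)))).comp u'
        + (LinearMap.toContinuousLinearMap
            (IsLinearMap.mk' _ (hg.linR (a p) (u p)))).comp v') p := by
  have hfun : (fun q => g (a q) (u q) (v q))
      = fun q => ∑ i, ∑ j, u q i * v q j * g (a q) (Pi.single i 1) (Pi.single j 1) :=
    funext fun q => metric_expand hg (a q) (u q) (v q)
  have hterm : ∀ i j : Fin n, HasFDerivAt
      (fun q => u q i * v q j * g (a q) (Pi.single i 1) (Pi.single j 1))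
      ((u p i * v p j) •
          ((fderiv ℝ (fun y => g y (Pi.single i 1) (Pi.single j 1)) (a p)).comp a')
        + (g (a p) (Pi.single i 1) (Pi.single j 1)) •
          ((u p i) • ((ContinuousLinearMap.proj j).comp v')
            + (v p j) • ((ContinuousLinearMap.proj i).comp u'))) p := by
    intro i j
    have hui : HasFDerivAt (fun q => u q i) ((ContinuousLinearMap.proj i).comp u') p :=
      ((ContinuousLinearMap.proj i : E n →L[ℝ] ℝ).hasFDerivAt).comp p hu
    have hvj : HasFDerivAt (fun q => v q j) ((ContinuousLinearMap.proj j).comp v') p :=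
      ((ContinuousLinearMap.proj j : E n →L[ℝ] ℝ).hasFDerivAt).comp p hv
    have hc : HasFDerivAt (fun q => g (a q) (Pi.single i 1) (Pi.single j 1))
        ((fderiv ℝ (fun y => g y (Pi.single i 1) (Pi.single j 1)) (a p)).comp a') p :=
      (((hg.smooth _ _).differentiable (by simp) (a p)).hasFDerivAt).comp p ha
    exact (hui.mul hvj).mul hc
  have hsum : HasFDerivAt
      (fun q => ∑ i, ∑ j, u q i * v q j * g (a q) (Pi.single i 1) (Pi.single j 1))
      (∑ i, ∑ j, ((u p i * v p j) •
          ((fderiv ℝ (fun y => g y (Pi.single i 1) (Pi.single j 1)) (a p)).comp a')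
        + (g (a p) (Pi.single i 1) (Pi.single j 1)) •
          ((u p i) • ((ContinuousLinearMap.proj j).comp v')
            + (v p j) • ((ContinuousLinearMap.proj i).comp u')))) p :=
    HasFDerivAt.fun_sum fun i _ => HasFDerivAt.fun_sum fun j _ => hterm i j
  rw [hfun]
  convert hsum using 1
  ext h
  have hfr : fderiv ℝ (fun x => g x (u p) (v p)) (a p) (a' h)
      = ∑ i, ∑ j, (u p i * v p j) *
          (fderiv ℝ (fun y => g y (Pi.single i 1) (Pi.single j 1)) (a p) (a' h)) := by
    rw [(frozen_hasFDerivAt hg (u p) (v p) (a p)).fderiv]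
    simp
  simp only [ContinuousLinearMap.add_apply, ContinuousLinearMap.sum_apply,
    ContinuousLinearMap.smul_apply, ContinuousLinearMap.comp_apply,
    ContinuousLinearMap.proj_apply, smul_eq_mul,
    LinearMap.coe_toContinuousLinearMap', IsLinearMap.mk'_apply]
  rw [hfr, metric_expand hg (a p) (u' h) (v p), metric_expand hg (a p) (u p) (v' h)]
  rw [← Finset.sum_add_distrib, ← Finset.sum_add_distrib]
  refine Finset.sum_congr rfl fun i _ => ?_
  rw [← Finset.sum_add_distrib, ← Finset.sum_add_distrib]
  refine Finset.sum_congr rfl fun j _ => ?_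
  ring

lemma killing_pointwise {n : ℕ} {g : E n → E n → E n → ℝ} (hg : IsMetric g)
    {ζ : E n → E n} (hK : IsKilling g ζ) (p v w : E n) :
    fderiv ℝ (fun x => g x v w) p (ζ p)
      + g p (fderiv ℝ ζ p v) w + g p v (fderiv ℝ ζ p w) = 0 := by
  have h := hK (fun _ => v) (fun _ => w) contDiff_const contDiff_const p
  simp only [lieD, dd, br, fderiv_fun_const, Pi.zero_apply, ContinuousLinearMap.zero_apply,
    zero_sub, zero_mul] at h
  rw [(hg.linL p w).map_neg, (hg.linR p v).map_neg] at h
  linarith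


/-- If `ζᵢ` is Killing on `Mᵢ` and `ζᵢ(fᵢ) = ρ fᵢ` for a common smooth
function `ρ`, then `ζ₁ + ζ₂` is conformal on the doubly warped product with factor `2ρ`. -/
theorem killing_plus_killing_conformal {n₁ n₂ : ℕ}
    (g₁ : E n₁ → E n₁ → E n₁ → ℝ) (g₂ : E n₂ → E n₂ → E n₂ → ℝ)
    (f₁ : E n₁ → ℝ) (f₂ : E n₂ → ℝ)
    (hg₁ : IsMetric g₁) (hg₂ : IsMetric g₂)
    (hg₁p : PosDef g₁) (hg₂p : PosDef g₂)
    (hf₁ : ContDiff ℝ (⊤ : ℕ∞) f₁) (hf₂ : ContDiff ℝ (⊤ : ℕ∞) f₂)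
    (hf₁0 : ∀ q, 0 < f₁ q) (hf₂0 : ∀ q, 0 < f₂ q)
    (ζ₁ : E n₁ → E n₁) (ζ₂ : E n₂ → E n₂)
    (hζ₁ : ContDiff ℝ (⊤ : ℕ∞) ζ₁) (hζ₂ : ContDiff ℝ (⊤ : ℕ∞) ζ₂)
    (ρ : E n₁ × E n₂ → ℝ) (hρ : ContDiff ℝ (⊤ : ℕ∞) ρ)
    (hK₁ : IsKilling g₁ ζ₁) (hK₂ : IsKilling g₂ ζ₂)
    (h₁ : ∀ p : E n₁ × E n₂, dd ζ₁ f₁ p.1 = ρ p * f₁ p.1)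
    (h₂ : ∀ p : E n₁ × E n₂, dd ζ₂ f₂ p.2 = ρ p * f₂ p.2) :
    IsConformal (dwg g₁ g₂ f₁ f₂) (lift1 ζ₁ + lift2 ζ₂) (fun p => 2 * ρ p) := by
  have hz : (lift1 ζ₁ + lift2 ζ₂ : (E n₁ × E n₂) → E n₁ × E n₂)
      = fun q => (ζ₁ q.1, ζ₂ q.2) := by
    funext q; simp [lift1, lift2, Prod.ext_iff]
  rw [hz]
  intro X Y hX hY p
  have hXd : HasFDerivAt X (fderiv ℝ X p) p := (hX.differentiable (by simp) p).hasFDerivAt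
  have hYd : HasFDerivAt Y (fderiv ℝ Y p) p := (hY.differentiable (by simp) p).hasFDerivAt
  have hX1 : HasFDerivAt (fun q => (X q).1)
      ((ContinuousLinearMap.fst ℝ (E n₁) (E n₂)).comp (fderiv ℝ X p)) p :=
    (ContinuousLinearMap.fst ℝ (E n₁) (E n₂)).hasFDerivAt.comp p hXd
  have hX2 : HasFDerivAt (fun q => (X q).2)
      ((ContinuousLinearMap.snd ℝ (E n₁) (E n₂)).comp (fderiv ℝ X p)) p :=
    (ContinuousLinearMap.snd ℝ (E n₁) (E n₂)).hasFDerivAt.comp p hXd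
  have hY1 : HasFDerivAt (fun q => (Y q).1)
      ((ContinuousLinearMap.fst ℝ (E n₁) (E n₂)).comp (fderiv ℝ Y p)) p :=
    (ContinuousLinearMap.fst ℝ (E n₁) (E n₂)).hasFDerivAt.comp p hYd
  have hY2 : HasFDerivAt (fun q => (Y q).2)
      ((ContinuousLinearMap.snd ℝ (E n₁) (E n₂)).comp (fderiv ℝ Y p)) p :=
    (ContinuousLinearMap.snd ℝ (E n₁) (E n₂)).hasFDerivAt.comp p hYd
  have hζd : HasFDerivAt (fun q : E n₁ × E n₂ => (ζ₁ q.1, ζ₂ q.2))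
      (((fderiv ℝ ζ₁ p.1).comp (ContinuousLinearMap.fst ℝ (E n₁) (E n₂))).prod
        ((fderiv ℝ ζ₂ p.2).comp (ContinuousLinearMap.snd ℝ (E n₁) (E n₂)))) p :=
    (((hζ₁.differentiable (by simp) p.1).hasFDerivAt.comp p hasFDerivAt_fst).prodMk
      ((hζ₂.differentiable (by simp) p.2).hasFDerivAt.comp p hasFDerivAt_snd))
  have hf1c : HasFDerivAt (fun q : E n₁ × E n₂ => f₁ q.1)
      ((fderiv ℝ f₁ p.1).comp (ContinuousLinearMap.fst ℝ (E n₁) (E n₂))) p :=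
    (hf₁.differentiable (by simp) p.1).hasFDerivAt.comp p hasFDerivAt_fst
  have hf2c : HasFDerivAt (fun q : E n₁ × E n₂ => f₂ q.2)
      ((fderiv ℝ f₂ p.2).comp (ContinuousLinearMap.snd ℝ (E n₁) (E n₂))) p :=
    (hf₂.differentiable (by simp) p.2).hasFDerivAt.comp p hasFDerivAt_snd
  have hs1 := hf1c.fun_mul hf1c
  have hs2 := hf2c.fun_mul hf2c
  have hG1 := metric_hasFDerivAt hg₁ hasFDerivAt_fst hX1 hY1
  have hG2 := metric_hasFDerivAt hg₂ hasFDerivAt_snd hX2 hY2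
  have htot := (hs2.fun_mul hG1).fun_add (hs1.fun_mul hG2)
  have hfeq : (fun q => dwg g₁ g₂ f₁ f₂ q (X q) (Y q))
      = fun q => (f₂ q.2 * f₂ q.2) * g₁ q.1 (X q).1 (Y q).1
          + (f₁ q.1 * f₁ q.1) * g₂ q.2 (X q).2 (Y q).2 := by
    funext q; simp only [dwg]; ring
  have hfd := htot.fderiv
  rw [← hfeq] at hfd
  have hζf : fderiv ℝ (fun q : E n₁ × E n₂ => (ζ₁ q.1, ζ₂ q.2)) p = _ := hζd.fderiv
  have K₁ := killing_pointwise hg₁ hK₁ p.1 (X p).1 (Y p).1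
  have K₂ := killing_pointwise hg₂ hK₂ p.2 (X p).2 (Y p).2
  have e₁ := h₁ p
  have e₂ := h₂ p
  simp only [dd] at e₁ e₂
  simp only [lieD, dd, br]
  rw [hfd, hζf]
  simp only [dwg,
    ContinuousLinearMap.add_apply, ContinuousLinearMap.comp_apply,
    ContinuousLinearMap.smul_apply, ContinuousLinearMap.prod_apply,
    ContinuousLinearMap.coe_fst', ContinuousLinearMap.coe_snd',
    LinearMap.coe_toContinuousLinearMap', IsLinearMap.mk'_apply,
    smul_eq_mul, Prod.fst_sub, Prod.snd_sub]
  rw [(hg₁.linL p.1 (Y p).1).map_sub, (hg₂.linL p.2 (Y p).2).map_sub,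
    (hg₁.linR p.1 (X p).1).map_sub, (hg₂.linR p.2 (X p).2).map_sub]
  linear_combination (f₂ p.2 ^ 2) * K₁ + (f₁ p.1 ^ 2) * K₂
    + (2 * f₂ p.2 * g₁ p.1 (X p).1 (Y p).1) * e₂
    + (2 * f₁ p.1 * g₂ p.2 (X p).2 (Y p).2) * e₁
end
end

section
/- Let M = M₁ ×_{f₁,f₂} M₂ be a doubly warped product and ζ = ζ₁ + ζ₂ a Killing vector field on M whose components ζᵢ are lifts of vector fields on Mᵢ. Then each ζᵢ is a conformal vector field on Mᵢ with conformal factor ρᵢ = −2ζⱼ(ln fⱼ), where j ≠ i (so that the conformal factor of ζᵢ is the function −2ζⱼ(ln fⱼ) pulled back to Mᵢ, which must be constant in the Mⱼ variable on each slice). -/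
noncomputable section

open scoped BigOperators

lemma basis_sum {n : ℕ} (v : E n) : v = ∑ i, v i • (Pi.single i (1:ℝ) : E n) := by
  funext k
  simp [Finset.sum_apply, Pi.single_apply]

lemma bilin_expand {n : ℕ} (g : E n → E n → E n → ℝ)
    (linL : ∀ p w, IsLinearMap ℝ (fun v => g p v w))
    (linR : ∀ p v, IsLinearMap ℝ (g p v)) (p : E n) (v w : E n) :
    g p v w = ∑ i, ∑ j, v i * w j * g p (Pi.single i 1) (Pi.single j 1) := by
  calc g p v w = g p (∑ i, v i • (Pi.single i (1:ℝ) : E n)) w := by rw [← basis_sum]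
    _ = ∑ i, g p (v i • (Pi.single i (1:ℝ) : E n)) w :=
        map_sum (IsLinearMap.mk' _ (linL p w)) _ _
    _ = ∑ i, v i * g p (Pi.single i 1) w := by
        refine Finset.sum_congr rfl fun i _ => ?_
        exact (linL p w).map_smul (v i) _
    _ = ∑ i, ∑ j, v i * w j * g p (Pi.single i 1) (Pi.single j 1) := by
        refine Finset.sum_congr rfl fun i _ => ?_
        calc v i * g p (Pi.single i 1) w
            = v i * g p (Pi.single i 1) (∑ j, w j • (Pi.single j (1:ℝ) : E n)) := by
              rw [← basis_sum]
          _ = v i * ∑ j, g p (Pi.single i 1) (w j • (Pi.single j (1:ℝ) : E n)) := by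
              exact congrArg (fun t => v i * t) (map_sum (IsLinearMap.mk' _ (linR p (Pi.single i 1))) _ _)
          _ = ∑ j, v i * w j * g p (Pi.single i 1) (Pi.single j 1) := by
              rw [Finset.mul_sum]
              refine Finset.sum_congr rfl fun j _ => ?_
              rw [(linR p (Pi.single i 1)).map_smul (w j)]
              simp [smul_eq_mul]; ring

open ContinuousLinearMap in
lemma hasF {n : ℕ} (g : E n → E n → E n → ℝ) (hg : IsMetric g)
    (X Y : E n → E n) (p : E n) (hX : DifferentiableAt ℝ X p) (hY : DifferentiableAt ℝ Y p) :
    HasFDerivAt (fun q => g q (X q) (Y q))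
      (∑ i, ∑ j,
        ((X p i * Y p j) • fderiv ℝ (fun q => g q (Pi.single i 1) (Pi.single j 1)) p
          + (g p (Pi.single i 1) (Pi.single j 1)) •
            ((X p i) • ((ContinuousLinearMap.proj j).comp (fderiv ℝ Y p))
              + (Y p j) • ((ContinuousLinearMap.proj i).comp (fderiv ℝ X p))))) p := by
  have hfun : (fun q => g q (X q) (Y q))
      = fun q => ∑ i, ∑ j, X q i * Y q j * g q (Pi.single i 1) (Pi.single j 1) := by
    funext q; exact bilin_expand g hg.linL hg.linR q _ _
  rw [hfun]
  apply HasFDerivAt.fun_sum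
  intro i _
  apply HasFDerivAt.fun_sum
  intro j _
  have hXi : HasFDerivAt (fun q => X q i) ((ContinuousLinearMap.proj i).comp (fderiv ℝ X p)) p :=
    ((ContinuousLinearMap.proj (R := ℝ) (φ := fun _ : Fin n => ℝ) i).hasFDerivAt).comp p hX.hasFDerivAt
  have hYj : HasFDerivAt (fun q => Y q j) ((ContinuousLinearMap.proj j).comp (fderiv ℝ Y p)) p :=
    ((ContinuousLinearMap.proj (R := ℝ) (φ := fun _ : Fin n => ℝ) j).hasFDerivAt).comp p hY.hasFDerivAt
  have hG : HasFDerivAt (fun q => g q (Pi.single i 1) (Pi.single j 1))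
      (fderiv ℝ (fun q => g q (Pi.single i 1) (Pi.single j 1)) p) p :=
    ((hg.smooth _ _).differentiable (by simp) p).hasFDerivAt
  exact (hXi.mul hYj).mul hG

lemma dd_g {n : ℕ} (g : E n → E n → E n → ℝ) (hg : IsMetric g)
    (ζ X Y : E n → E n) (p : E n) (hX : DifferentiableAt ℝ X p) (hY : DifferentiableAt ℝ Y p) :
    dd ζ (fun q => g q (X q) (Y q)) p
      = dd ζ (fun q => g q (X p) (Y p)) p
        + g p (fderiv ℝ X p (ζ p)) (Y p) + g p (X p) (fderiv ℝ Y p (ζ p)) := by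
  have h1 : dd ζ (fun q => g q (X q) (Y q)) p
      = ∑ i, ∑ j,
          (X p i * Y p j * fderiv ℝ (fun q => g q (Pi.single i 1) (Pi.single j 1)) p (ζ p)
            + g p (Pi.single i 1) (Pi.single j 1) *
              (X p i * fderiv ℝ Y p (ζ p) j + Y p j * fderiv ℝ X p (ζ p) i)) := by
    rw [dd, (hasF g hg X Y p hX hY).fderiv]
    simp [ContinuousLinearMap.sum_apply, ContinuousLinearMap.add_apply,
      ContinuousLinearMap.smul_apply, ContinuousLinearMap.comp_apply,
      ContinuousLinearMap.proj_apply, smul_eq_mul, mul_add]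
  have h2 : dd ζ (fun q => g q (X p) (Y p)) p
      = ∑ i, ∑ j,
          X p i * Y p j * fderiv ℝ (fun q => g q (Pi.single i 1) (Pi.single j 1)) p (ζ p) := by
    rw [dd, (hasF g hg (fun _ => X p) (fun _ => Y p) p (differentiableAt_const _)
      (differentiableAt_const _)).fderiv]
    simp [ContinuousLinearMap.sum_apply, ContinuousLinearMap.add_apply,
      ContinuousLinearMap.smul_apply, ContinuousLinearMap.comp_apply,
      ContinuousLinearMap.proj_apply, smul_eq_mul]
  have h3 := bilin_expand g hg.linL hg.linR p (fderiv ℝ X p (ζ p)) (Y p)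
  have h4 := bilin_expand g hg.linL hg.linR p (X p) (fderiv ℝ Y p (ζ p))
  rw [h1, h2, h3, h4, ← Finset.sum_add_distrib, ← Finset.sum_add_distrib]
  refine Finset.sum_congr rfl fun i _ => ?_
  rw [← Finset.sum_add_distrib, ← Finset.sum_add_distrib]
  refine Finset.sum_congr rfl fun j _ => ?_
  ring

lemma lieD_pointwise {n : ℕ} (g : E n → E n → E n → ℝ) (hg : IsMetric g)
    (ζ X Y : E n → E n) (p : E n) (hζ : DifferentiableAt ℝ ζ p)
    (hX : DifferentiableAt ℝ X p) (hY : DifferentiableAt ℝ Y p) :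
    lieD g ζ X Y p
      = dd ζ (fun q => g q (X p) (Y p)) p
        + g p (fderiv ℝ ζ p (X p)) (Y p) + g p (X p) (fderiv ℝ ζ p (Y p)) := by
  rw [lieD, dd_g g hg ζ X Y p hX hY, br, br]
  have e1 : g p (fderiv ℝ X p (ζ p) - fderiv ℝ ζ p (X p)) (Y p)
      = g p (fderiv ℝ X p (ζ p)) (Y p) - g p (fderiv ℝ ζ p (X p)) (Y p) := by
    exact map_sub (IsLinearMap.mk' _ (hg.linL p (Y p))) _ _
  have e2 : g p (X p) (fderiv ℝ Y p (ζ p) - fderiv ℝ ζ p (Y p))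
      = g p (X p) (fderiv ℝ Y p (ζ p)) - g p (X p) (fderiv ℝ ζ p (Y p)) :=
    map_sub (IsLinearMap.mk' _ (hg.linR p (X p))) _ _
  rw [e1, e2]; ring

lemma lieD_tensorial {n : ℕ} (g : E n → E n → E n → ℝ) (hg : IsMetric g)
    (ζ X Y : E n → E n) (p : E n) (hζ : DifferentiableAt ℝ ζ p)
    (hX : DifferentiableAt ℝ X p) (hY : DifferentiableAt ℝ Y p) :
    lieD g ζ X Y p = lieD g ζ (fun _ => X p) (fun _ => Y p) p := by
  rw [lieD_pointwise g hg ζ X Y p hζ hX hY,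
    lieD_pointwise g hg ζ (fun _ => X p) (fun _ => Y p) p hζ (differentiableAt_const _)
      (differentiableAt_const _)]


lemma dd_log {n : ℕ} (f : E n → ℝ) (hf : ContDiff ℝ (⊤ : ℕ∞) f) (hf0 : ∀ q, 0 < f q)
    (ζ : E n → E n) (p : E n) :
    dd ζ (fun q => Real.log (f q)) p = (f p)⁻¹ * dd ζ f p := by
  have h := (Real.hasDerivAt_log (ne_of_gt (hf0 p))).comp_hasFDerivAt p
    ((hf.differentiable (by simp) p).hasFDerivAt)
  rw [dd, show (fun q => Real.log (f q)) = Real.log ∘ f from rfl, h.fderiv]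
  simp [dd, smul_eq_mul]

lemma key1 {n₁ n₂ : ℕ} (g₁ : E n₁ → E n₁ → E n₁ → ℝ) (g₂ : E n₂ → E n₂ → E n₂ → ℝ)
    (f₁ : E n₁ → ℝ) (f₂ : E n₂ → ℝ)
    (hg₁ : IsMetric g₁) (hg₂ : IsMetric g₂)
    (hf₂ : ContDiff ℝ (⊤ : ℕ∞) f₂) (hf₂0 : ∀ q, 0 < f₂ q)
    (ζ₁ : E n₁ → E n₁) (ζ₂ : E n₂ → E n₂)
    (hζ₁ : ContDiff ℝ (⊤ : ℕ∞) ζ₁) (hζ₂ : ContDiff ℝ (⊤ : ℕ∞) ζ₂)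
    (hK : IsKilling (dwg g₁ g₂ f₁ f₂) (lift1 ζ₁ + lift2 ζ₂))
    (p : E n₁ × E n₂) (v w : E n₁) :
    lieD g₁ ζ₁ (fun _ => v) (fun _ => w) p.1
      = (-2 * dd ζ₂ (fun q => Real.log (f₂ q)) p.2) * g₁ p.1 v w := by
  have hζfun : lift1 ζ₁ + lift2 ζ₂ = fun q : E n₁ × E n₂ => (ζ₁ q.1, ζ₂ q.2) := by
    funext q; simp [lift1, lift2, Prod.ext_iff]
  -- derivative of ζ on the product
  have hζd : HasFDerivAt (lift1 ζ₁ + lift2 ζ₂)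
      (((fderiv ℝ ζ₁ p.1).comp (ContinuousLinearMap.fst ℝ (E n₁) (E n₂))).prod
        ((fderiv ℝ ζ₂ p.2).comp (ContinuousLinearMap.snd ℝ (E n₁) (E n₂)))) p := by
    rw [hζfun]
    exact HasFDerivAt.prodMk (((hζ₁.differentiable (by simp) p.1).hasFDerivAt).comp p hasFDerivAt_fst)
      (((hζ₂.differentiable (by simp) p.2).hasFDerivAt).comp p hasFDerivAt_snd)
  have hζp := congrFun hζfun p
  -- bracket with a constant lifted field
  have hbr : ∀ u : E n₁, br (lift1 ζ₁ + lift2 ζ₂) (fun _ => ((u, 0) : E n₁ × E n₂)) p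
      = (-(fderiv ℝ ζ₁ p.1 u), 0) := by
    intro u
    rw [br, fderiv_fun_const, hζd.fderiv]
    simp [Prod.ext_iff]
  -- the scalar function q ↦ g q (v,0) (w,0)
  have hφ : (fun q : E n₁ × E n₂ => dwg g₁ g₂ f₁ f₂ q ((v, 0) : E n₁ × E n₂) ((w, 0) : E n₁ × E n₂))
      = fun q => (f₂ q.2 * f₂ q.2) * g₁ q.1 v w := by
    funext q
    simp [dwg, (hg₂.linR q.2 0).map_zero, pow_two]
  have hf2d : HasFDerivAt (fun q : E n₁ × E n₂ => f₂ q.2)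
      ((fderiv ℝ f₂ p.2).comp (ContinuousLinearMap.snd ℝ (E n₁) (E n₂))) p :=
    ((hf₂.differentiable (by simp) p.2).hasFDerivAt).comp p hasFDerivAt_snd
  have hg1d : HasFDerivAt (fun q : E n₁ × E n₂ => g₁ q.1 v w)
      ((fderiv ℝ (fun x => g₁ x v w) p.1).comp (ContinuousLinearMap.fst ℝ (E n₁) (E n₂))) p :=
    (((hg₁.smooth v w).differentiable (by simp) p.1).hasFDerivAt).comp p hasFDerivAt_fst
  have hφd := (hf2d.fun_mul hf2d).fun_mul hg1d
  have hdd : dd (lift1 ζ₁ + lift2 ζ₂)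
      (fun q : E n₁ × E n₂ => dwg g₁ g₂ f₁ f₂ q ((v, 0) : E n₁ × E n₂) ((w, 0) : E n₁ × E n₂)) p
      = (f₂ p.2)^2 * dd ζ₁ (fun x => g₁ x v w) p.1
        + 2 * f₂ p.2 * dd ζ₂ f₂ p.2 * g₁ p.1 v w := by
    rw [dd, hφ, hφd.fderiv, hζp]
    simp [dd, smul_eq_mul]
    ring
  -- Killing equation for the constant lifts
  have hK0 := hK (fun _ => ((v, 0) : E n₁ × E n₂)) (fun _ => ((w, 0) : E n₁ × E n₂))
    contDiff_const contDiff_const p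
  rw [zero_mul] at hK0
  rw [lieD] at hK0
  rw [hbr v, hbr w] at hK0
  rw [show (fun q : E n₁ × E n₂ => dwg g₁ g₂ f₁ f₂ q ((fun _ => ((v,0):E n₁ × E n₂)) q)
      ((fun _ => ((w,0):E n₁ × E n₂)) q)) = (fun q : E n₁ × E n₂ => dwg g₁ g₂ f₁ f₂ q
      ((v, 0) : E n₁ × E n₂) ((w, 0) : E n₁ × E n₂)) from rfl, hdd] at hK0
  have e1 : dwg g₁ g₂ f₁ f₂ p (-(fderiv ℝ ζ₁ p.1 v), 0) ((w, 0) : E n₁ × E n₂)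
      = -((f₂ p.2)^2 * g₁ p.1 (fderiv ℝ ζ₁ p.1 v) w) := by
    simp [dwg, (hg₂.linR p.2 _).map_zero, (hg₁.linL p.1 w).map_neg]
  have e2 : dwg g₁ g₂ f₁ f₂ p ((v, 0) : E n₁ × E n₂) (-(fderiv ℝ ζ₁ p.1 w), 0)
      = -((f₂ p.2)^2 * g₁ p.1 v (fderiv ℝ ζ₁ p.1 w)) := by
    simp [dwg, (hg₂.linR p.2 _).map_zero, (hg₁.linR p.1 v).map_neg]
  rw [e1, e2] at hK0
  -- left side in terms of lieD g₁
  have hL : lieD g₁ ζ₁ (fun _ => v) (fun _ => w) p.1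
      = dd ζ₁ (fun x => g₁ x v w) p.1
        + g₁ p.1 (fderiv ℝ ζ₁ p.1 v) w + g₁ p.1 v (fderiv ℝ ζ₁ p.1 w) := by
    rw [lieD, br, br, fderiv_fun_const]
    simp [(hg₁.linL p.1 w).map_neg, (hg₁.linR p.1 v).map_neg]
  rw [dd_log f₂ hf₂ hf₂0 ζ₂ p.2, hL]
  have hfne : f₂ p.2 ≠ 0 := ne_of_gt (hf₂0 p.2)
  have key : (dd ζ₁ (fun x => g₁ x v w) p.1 + g₁ p.1 (fderiv ℝ ζ₁ p.1 v) w
      + g₁ p.1 v (fderiv ℝ ζ₁ p.1 w)) * f₂ p.2 = -(2 * dd ζ₂ f₂ p.2 * g₁ p.1 v w) := by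
    apply mul_left_cancel₀ hfne
    linear_combination hK0
  field_simp
  linear_combination key

lemma key2 {n₁ n₂ : ℕ} (g₁ : E n₁ → E n₁ → E n₁ → ℝ) (g₂ : E n₂ → E n₂ → E n₂ → ℝ)
    (f₁ : E n₁ → ℝ) (f₂ : E n₂ → ℝ)
    (hg₁ : IsMetric g₁) (hg₂ : IsMetric g₂)
    (hf₁ : ContDiff ℝ (⊤ : ℕ∞) f₁) (hf₁0 : ∀ q, 0 < f₁ q)
    (ζ₁ : E n₁ → E n₁) (ζ₂ : E n₂ → E n₂)
    (hζ₁ : ContDiff ℝ (⊤ : ℕ∞) ζ₁) (hζ₂ : ContDiff ℝ (⊤ : ℕ∞) ζ₂)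
    (hK : IsKilling (dwg g₁ g₂ f₁ f₂) (lift1 ζ₁ + lift2 ζ₂))
    (p : E n₁ × E n₂) (v w : E n₂) :
    lieD g₂ ζ₂ (fun _ => v) (fun _ => w) p.2
      = (-2 * dd ζ₁ (fun q => Real.log (f₁ q)) p.1) * g₂ p.2 v w := by
  have hζfun : lift1 ζ₁ + lift2 ζ₂ = fun q : E n₁ × E n₂ => (ζ₁ q.1, ζ₂ q.2) := by
    funext q; simp [lift1, lift2, Prod.ext_iff]
  have hζd : HasFDerivAt (lift1 ζ₁ + lift2 ζ₂)
      (((fderiv ℝ ζ₁ p.1).comp (ContinuousLinearMap.fst ℝ (E n₁) (E n₂))).prod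
        ((fderiv ℝ ζ₂ p.2).comp (ContinuousLinearMap.snd ℝ (E n₁) (E n₂)))) p := by
    rw [hζfun]
    exact HasFDerivAt.prodMk (((hζ₁.differentiable (by simp) p.1).hasFDerivAt).comp p hasFDerivAt_fst)
      (((hζ₂.differentiable (by simp) p.2).hasFDerivAt).comp p hasFDerivAt_snd)
  have hζp := congrFun hζfun p
  have hbr : ∀ u : E n₂, br (lift1 ζ₁ + lift2 ζ₂) (fun _ => ((0, u) : E n₁ × E n₂)) p
      = (0, -(fderiv ℝ ζ₂ p.2 u)) := by
    intro u
    rw [br, fderiv_fun_const, hζd.fderiv]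
    simp [Prod.ext_iff]
  have hφ : (fun q : E n₁ × E n₂ => dwg g₁ g₂ f₁ f₂ q ((0, v) : E n₁ × E n₂) ((0, w) : E n₁ × E n₂))
      = fun q => (f₁ q.1 * f₁ q.1) * g₂ q.2 v w := by
    funext q
    simp [dwg, (hg₁.linR q.1 0).map_zero, pow_two]
  have hf1d : HasFDerivAt (fun q : E n₁ × E n₂ => f₁ q.1)
      ((fderiv ℝ f₁ p.1).comp (ContinuousLinearMap.fst ℝ (E n₁) (E n₂))) p :=
    ((hf₁.differentiable (by simp) p.1).hasFDerivAt).comp p hasFDerivAt_fst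
  have hg2d : HasFDerivAt (fun q : E n₁ × E n₂ => g₂ q.2 v w)
      ((fderiv ℝ (fun x => g₂ x v w) p.2).comp (ContinuousLinearMap.snd ℝ (E n₁) (E n₂))) p :=
    (((hg₂.smooth v w).differentiable (by simp) p.2).hasFDerivAt).comp p hasFDerivAt_snd
  have hφd := (hf1d.fun_mul hf1d).fun_mul hg2d
  have hdd : dd (lift1 ζ₁ + lift2 ζ₂)
      (fun q : E n₁ × E n₂ => dwg g₁ g₂ f₁ f₂ q ((0, v) : E n₁ × E n₂) ((0, w) : E n₁ × E n₂)) p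
      = (f₁ p.1)^2 * dd ζ₂ (fun x => g₂ x v w) p.2
        + 2 * f₁ p.1 * dd ζ₁ f₁ p.1 * g₂ p.2 v w := by
    rw [dd, hφ, hφd.fderiv, hζp]
    simp [dd, smul_eq_mul]
    ring
  have hK0 := hK (fun _ => ((0, v) : E n₁ × E n₂)) (fun _ => ((0, w) : E n₁ × E n₂))
    contDiff_const contDiff_const p
  rw [zero_mul] at hK0
  rw [lieD] at hK0
  rw [hbr v, hbr w] at hK0
  rw [show (fun q : E n₁ × E n₂ => dwg g₁ g₂ f₁ f₂ q ((fun _ => ((0,v):E n₁ × E n₂)) q)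
      ((fun _ => ((0,w):E n₁ × E n₂)) q)) = (fun q : E n₁ × E n₂ => dwg g₁ g₂ f₁ f₂ q
      ((0, v) : E n₁ × E n₂) ((0, w) : E n₁ × E n₂)) from rfl, hdd] at hK0
  have e1 : dwg g₁ g₂ f₁ f₂ p (0, -(fderiv ℝ ζ₂ p.2 v)) ((0, w) : E n₁ × E n₂)
      = -((f₁ p.1)^2 * g₂ p.2 (fderiv ℝ ζ₂ p.2 v) w) := by
    simp [dwg, (hg₁.linR p.1 _).map_zero, (hg₂.linL p.2 w).map_neg]
  have e2 : dwg g₁ g₂ f₁ f₂ p ((0, v) : E n₁ × E n₂) (0, -(fderiv ℝ ζ₂ p.2 w))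
      = -((f₁ p.1)^2 * g₂ p.2 v (fderiv ℝ ζ₂ p.2 w)) := by
    simp [dwg, (hg₁.linR p.1 _).map_zero, (hg₂.linR p.2 v).map_neg]
  rw [e1, e2] at hK0
  have hL : lieD g₂ ζ₂ (fun _ => v) (fun _ => w) p.2
      = dd ζ₂ (fun x => g₂ x v w) p.2
        + g₂ p.2 (fderiv ℝ ζ₂ p.2 v) w + g₂ p.2 v (fderiv ℝ ζ₂ p.2 w) := by
    rw [lieD, br, br, fderiv_fun_const]
    simp [(hg₂.linL p.2 w).map_neg, (hg₂.linR p.2 v).map_neg]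
  rw [dd_log f₁ hf₁ hf₁0 ζ₁ p.1, hL]
  have hfne : f₁ p.1 ≠ 0 := ne_of_gt (hf₁0 p.1)
  have key : (dd ζ₂ (fun x => g₂ x v w) p.2 + g₂ p.2 (fderiv ℝ ζ₂ p.2 v) w
      + g₂ p.2 v (fderiv ℝ ζ₂ p.2 w)) * f₁ p.1 = -(2 * dd ζ₁ f₁ p.1 * g₂ p.2 v w) := by
    apply mul_left_cancel₀ hfne
    linear_combination hK0
  field_simp
  linear_combination key


/-- If `ζ = ζ₁ + ζ₂` is Killing on the doubly warped product, then each
`ζᵢ` is conformal on `Mᵢ` with (necessarily constant) factor `−2ζⱼ(ln fⱼ)`, `j ≠ i`. -/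
theorem killing_components_conformal {n₁ n₂ : ℕ} (hn₁ : 0 < n₁) (hn₂ : 0 < n₂)
    (g₁ : E n₁ → E n₁ → E n₁ → ℝ) (g₂ : E n₂ → E n₂ → E n₂ → ℝ)
    (f₁ : E n₁ → ℝ) (f₂ : E n₂ → ℝ)
    (hg₁ : IsMetric g₁) (hg₂ : IsMetric g₂)
    (hg₁p : PosDef g₁) (hg₂p : PosDef g₂)
    (hf₁ : ContDiff ℝ (⊤ : ℕ∞) f₁) (hf₂ : ContDiff ℝ (⊤ : ℕ∞) f₂)
    (hf₁0 : ∀ q, 0 < f₁ q) (hf₂0 : ∀ q, 0 < f₂ q)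
    (ζ₁ : E n₁ → E n₁) (ζ₂ : E n₂ → E n₂)
    (hζ₁ : ContDiff ℝ (⊤ : ℕ∞) ζ₁) (hζ₂ : ContDiff ℝ (⊤ : ℕ∞) ζ₂)
    (hK : IsKilling (dwg g₁ g₂ f₁ f₂) (lift1 ζ₁ + lift2 ζ₂)) :
    (∃ c₁ : ℝ, (∀ q₂ : E n₂, -2 * dd ζ₂ (fun q => Real.log (f₂ q)) q₂ = c₁) ∧
        IsConformal g₁ ζ₁ (fun _ => c₁)) ∧
    (∃ c₂ : ℝ, (∀ q₁ : E n₁, -2 * dd ζ₁ (fun q => Real.log (f₁ q)) q₁ = c₂) ∧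
        IsConformal g₂ ζ₂ (fun _ => c₂)) := by
  
  constructor
  · refine ⟨-2 * dd ζ₂ (fun q => Real.log (f₂ q)) 0, ?_, ?_⟩
    · intro q₂
      have hv₀ : (fun _ => (1:ℝ) : E n₁) ≠ 0 := by
        intro h
        have := congrFun h ⟨0, hn₁⟩
        simp at this
      have hpos : 0 < g₁ 0 (fun _ => 1) (fun _ => 1) := hg₁p 0 _ hv₀
      have h1 := key1 g₁ g₂ f₁ f₂ hg₁ hg₂ hf₂ hf₂0 ζ₁ ζ₂ hζ₁ hζ₂ hK (0, q₂)
        (fun _ => 1) (fun _ => 1)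
      have h2 := key1 g₁ g₂ f₁ f₂ hg₁ hg₂ hf₂ hf₂0 ζ₁ ζ₂ hζ₁ hζ₂ hK (0, 0)
        (fun _ => 1) (fun _ => 1)
      exact mul_right_cancel₀ (ne_of_gt hpos) (h1.symm.trans h2)
    · intro X Y hX hY p
      rw [lieD_tensorial g₁ hg₁ ζ₁ X Y p (hζ₁.differentiable (by simp) p)
        (hX.differentiable (by simp) p) (hY.differentiable (by simp) p)]
      exact key1 g₁ g₂ f₁ f₂ hg₁ hg₂ hf₂ hf₂0 ζ₁ ζ₂ hζ₁ hζ₂ hK (p, 0) (X p) (Y p)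
  · refine ⟨-2 * dd ζ₁ (fun q => Real.log (f₁ q)) 0, ?_, ?_⟩
    · intro q₁
      have hv₀ : (fun _ => (1:ℝ) : E n₂) ≠ 0 := by
        intro h
        have := congrFun h ⟨0, hn₂⟩
        simp at this
      have hpos : 0 < g₂ 0 (fun _ => 1) (fun _ => 1) := hg₂p 0 _ hv₀
      have h1 := key2 g₁ g₂ f₁ f₂ hg₁ hg₂ hf₁ hf₁0 ζ₁ ζ₂ hζ₁ hζ₂ hK (q₁, 0)
        (fun _ => 1) (fun _ => 1)
      have h2 := key2 g₁ g₂ f₁ f₂ hg₁ hg₂ hf₁ hf₁0 ζ₁ ζ₂ hζ₁ hζ₂ hK (0, 0)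
        (fun _ => 1) (fun _ => 1)
      exact mul_right_cancel₀ (ne_of_gt hpos) (h1.symm.trans h2)
    · intro X Y hX hY p
      rw [lieD_tensorial g₂ hg₂ ζ₂ X Y p (hζ₂.differentiable (by simp) p)
        (hX.differentiable (by simp) p) (hY.differentiable (by simp) p)]
      exact key2 g₁ g₂ f₁ f₂ hg₁ hg₂ hf₁ hf₁0 ζ₁ ζ₂ hζ₁ hζ₂ hK (0, p) (X p) (Y p)
end
end

section
/- Let M = M₁ ×_{f₁,f₂} M₂ be a doubly warped product and let ζ = ζ₁ + ζ₂ be a conformal vector field on M with factor ρ. Along a curve α with unit tangent T = V₁ + V₂, the conformal factor satisfies ρ = 2[f₂²g₁(D¹_{V₁}ζ₁, V₁) + f₁²g₂(D²_{V₂}ζ₂, V₂) + f₂ζ₂(f₂)‖V₁‖₁² + f₁ζ₁(f₁)‖V₂‖₂²]. -/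
noncomputable section

open scoped BigOperators

-- auxiliary lemmas

section AuxLemmas
variable {n : ℕ} {g : E n → E n → E n → ℝ}

def ee (n : ℕ) (i : Fin n) : E n := fun j => if i = j then 1 else 0

lemma expandL (hg : IsMetric g) (p v w : E n) :
    g p v w = ∑ i, v i * g p (ee n i) w := by
  have hL := hg.linL p w
  have hv : v = ∑ i, v i • ee n i := pi_eq_sum_univ v
  calc g p v w = (fun v => g p v w) (∑ i, v i • ee n i) := by rw [← hv]
    _ = ∑ i, v i * g p (ee n i) w := by
        rw [show (fun v => g p v w) = (IsLinearMap.mk' _ hL : E n →ₗ[ℝ] ℝ) from rfl, map_sum]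
        simp [smul_eq_mul]

lemma expand2 (hg : IsMetric g) (p v w : E n) :
    g p v w = ∑ i, ∑ j, v i * (w j * g p (ee n i) (ee n j)) := by
  rw [expandL hg]
  refine Finset.sum_congr rfl fun i _ => ?_
  have hR := hg.linR p (ee n i)
  have hw : w = ∑ j, w j • ee n j := pi_eq_sum_univ w
  have : g p (ee n i) w = ∑ j, w j * g p (ee n i) (ee n j) := by
    calc g p (ee n i) w = g p (ee n i) (∑ j, w j • ee n j) := by rw [← hw]
      _ = ∑ j, w j * g p (ee n i) (ee n j) := by
          rw [show (g p (ee n i)) = ((IsLinearMap.mk' _ hR : E n →ₗ[ℝ] ℝ) : E n → ℝ) from rfl,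
            map_sum]
          simp [smul_eq_mul]
  rw [this, Finset.mul_sum]

lemma contDiff_gVW (hg : IsMetric g) {V W : E n → E n}
    (hV : ContDiff ℝ (⊤ : ℕ∞) V) (hW : ContDiff ℝ (⊤ : ℕ∞) W) :
    ContDiff ℝ (⊤ : ℕ∞) (fun q => g q (V q) (W q)) := by
  have : (fun q => g q (V q) (W q))
      = fun q => ∑ i, ∑ j, V q i * (W q j * g q (ee n i) (ee n j)) := by
    funext q; exact expand2 hg q _ _
  rw [this]
  refine ContDiff.sum fun i _ => ContDiff.sum fun j _ => ?_
  exact ((ContinuousLinearMap.proj i).contDiff.comp hV).mul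
    (((ContinuousLinearMap.proj j).contDiff.comp hW).mul (hg.smooth _ _))

lemma lc_lie (hg : IsMetric g)
    {D : (E n → E n) → (E n → E n) → (E n → E n)} (hD : IsLC g D)
    {ζ V : E n → E n} (hζ : ContDiff ℝ (⊤ : ℕ∞) ζ) (hV : ContDiff ℝ (⊤ : ℕ∞) V) (p : E n) :
    2 * g p (D V ζ p) (V p) = lieD g ζ V V p := by
  have h := hD V ζ V hV hζ hV p
  have hsym : (fun q => g q (ζ q) (V q)) = fun q => g q (V q) (ζ q) :=
    funext fun q => hg.symm q _ _
  have hbrVV : br V V p = 0 := by simp [br]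
  have hbrVζ : br V ζ p = -(br ζ V p) := by simp [br, neg_sub]
  have hzero : g p (0 : E n) (ζ p) = 0 := (hg.linL p (ζ p)).map_zero
  have hneg : g p (-(br ζ V p)) (V p) = - g p (br ζ V p) (V p) :=
    (hg.linL p (V p)).map_neg _
  have hsymm2 : g p (V p) (br ζ V p) = g p (br ζ V p) (V p) := hg.symm p _ _
  rw [h, hsym, hbrVV, hbrVζ, hzero, hneg]
  simp only [lieD, hsymm2]
  ring

end AuxLemmas


/-- The conformal factor of a conformal field `ζ = ζ₁ + ζ₂` on a doubly
warped product, evaluated at a point where `T = V₁ + V₂` is a unit vector. -/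
theorem doubly_warped_conformal_factor {n₁ n₂ : ℕ}
    (g₁ : E n₁ → E n₁ → E n₁ → ℝ) (g₂ : E n₂ → E n₂ → E n₂ → ℝ)
    (f₁ : E n₁ → ℝ) (f₂ : E n₂ → ℝ)
    (hg₁ : IsMetric g₁) (hg₂ : IsMetric g₂)
    (hg₁p : PosDef g₁) (hg₂p : PosDef g₂)
    (hf₁ : ContDiff ℝ (⊤ : ℕ∞) f₁) (hf₂ : ContDiff ℝ (⊤ : ℕ∞) f₂)
    (hf₁0 : ∀ q, 0 < f₁ q) (hf₂0 : ∀ q, 0 < f₂ q)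
    (D₁ : (E n₁ → E n₁) → (E n₁ → E n₁) → (E n₁ → E n₁))
    (D₂ : (E n₂ → E n₂) → (E n₂ → E n₂) → (E n₂ → E n₂))
    (hD₁ : IsLC g₁ D₁) (hD₂ : IsLC g₂ D₂)
    (ζ₁ V₁ : E n₁ → E n₁) (ζ₂ V₂ : E n₂ → E n₂)
    (hζ₁ : ContDiff ℝ (⊤ : ℕ∞) ζ₁) (hζ₂ : ContDiff ℝ (⊤ : ℕ∞) ζ₂)
    (hV₁ : ContDiff ℝ (⊤ : ℕ∞) V₁) (hV₂ : ContDiff ℝ (⊤ : ℕ∞) V₂)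
    (ρ : E n₁ × E n₂ → ℝ)
    (hconf : IsConformal (dwg g₁ g₂ f₁ f₂) (sumVF ζ₁ ζ₂) ρ)
    (p : E n₁ × E n₂)
    (hunit : dwg g₁ g₂ f₁ f₂ p ((sumVF V₁ V₂) p) ((sumVF V₁ V₂) p) = 1) :
    ρ p = 2 * ((f₂ p.2)^2 * g₁ p.1 (D₁ V₁ ζ₁ p.1) (V₁ p.1)
      + (f₁ p.1)^2 * g₂ p.2 (D₂ V₂ ζ₂ p.2) (V₂ p.2)
      + f₂ p.2 * fderiv ℝ f₂ p.2 (ζ₂ p.2) * g₁ p.1 (V₁ p.1) (V₁ p.1)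
      + f₁ p.1 * fderiv ℝ f₁ p.1 (ζ₁ p.1) * g₂ p.2 (V₂ p.2) (V₂ p.2)) := by
  classical
  -- notation
  set A : E n₁ → ℝ := fun x => g₁ x (V₁ x) (V₁ x) with hAdef
  set B : E n₂ → ℝ := fun y => g₂ y (V₂ y) (V₂ y) with hBdef
  have hA : ContDiff ℝ (⊤ : ℕ∞) A := contDiff_gVW hg₁ hV₁ hV₁
  have hB : ContDiff ℝ (⊤ : ℕ∞) B := contDiff_gVW hg₂ hV₂ hV₂
  have hT : ContDiff ℝ (⊤ : ℕ∞) (sumVF V₁ V₂ : E n₁ × E n₂ → E n₁ × E n₂) :=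
    ContDiff.prodMk (hV₁.comp contDiff_fst) (hV₂.comp contDiff_snd)
  -- conformality at p with X = Y = T
  have hmain := hconf (sumVF V₁ V₂) (sumVF V₁ V₂) hT hT p
  rw [hunit, mul_one] at hmain
  -- derivative of T and ζ on the product
  have hTd : HasFDerivAt (sumVF V₁ V₂ : E n₁ × E n₂ → E n₁ × E n₂)
      (((fderiv ℝ V₁ p.1).comp (ContinuousLinearMap.fst ℝ (E n₁) (E n₂))).prod
        ((fderiv ℝ V₂ p.2).comp (ContinuousLinearMap.snd ℝ (E n₁) (E n₂)))) p :=
    HasFDerivAt.prodMk (((hV₁.differentiable (by simp) p.1).hasFDerivAt).comp p (hasFDerivAt_fst))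
      (((hV₂.differentiable (by simp) p.2).hasFDerivAt).comp p (hasFDerivAt_snd))
  have hζd : HasFDerivAt (sumVF ζ₁ ζ₂ : E n₁ × E n₂ → E n₁ × E n₂)
      (((fderiv ℝ ζ₁ p.1).comp (ContinuousLinearMap.fst ℝ (E n₁) (E n₂))).prod
        ((fderiv ℝ ζ₂ p.2).comp (ContinuousLinearMap.snd ℝ (E n₁) (E n₂)))) p :=
    HasFDerivAt.prodMk (((hζ₁.differentiable (by simp) p.1).hasFDerivAt).comp p (hasFDerivAt_fst))
      (((hζ₂.differentiable (by simp) p.2).hasFDerivAt).comp p (hasFDerivAt_snd))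
  have hbr : br (sumVF ζ₁ ζ₂) (sumVF V₁ V₂) p = (br ζ₁ V₁ p.1, br ζ₂ V₂ p.2) := by
    simp only [br, hTd.fderiv, hζd.fderiv]
    simp [sumVF, Prod.ext_iff]
  -- derivative of the scalar function q ↦ g(T,T)(q)
  have hΦeq : (fun q : E n₁ × E n₂ =>
      dwg g₁ g₂ f₁ f₂ q (sumVF V₁ V₂ q) (sumVF V₁ V₂ q))
      = fun q => (f₂ q.2 * f₂ q.2) * A q.1 + (f₁ q.1 * f₁ q.1) * B q.2 := by
    funext q; simp [dwg, sumVF, hAdef, hBdef]; ring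
  have hf2c : HasFDerivAt (fun q : E n₁ × E n₂ => f₂ q.2)
      ((fderiv ℝ f₂ p.2).comp (ContinuousLinearMap.snd ℝ (E n₁) (E n₂))) p :=
    ((hf₂.differentiable (by simp) p.2).hasFDerivAt).comp p hasFDerivAt_snd
  have hf1c : HasFDerivAt (fun q : E n₁ × E n₂ => f₁ q.1)
      ((fderiv ℝ f₁ p.1).comp (ContinuousLinearMap.fst ℝ (E n₁) (E n₂))) p :=
    ((hf₁.differentiable (by simp) p.1).hasFDerivAt).comp p hasFDerivAt_fst
  have hAc : HasFDerivAt (fun q : E n₁ × E n₂ => A q.1)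
      ((fderiv ℝ A p.1).comp (ContinuousLinearMap.fst ℝ (E n₁) (E n₂))) p :=
    ((hA.differentiable (by simp) p.1).hasFDerivAt).comp p hasFDerivAt_fst
  have hBc : HasFDerivAt (fun q : E n₁ × E n₂ => B q.2)
      ((fderiv ℝ B p.2).comp (ContinuousLinearMap.snd ℝ (E n₁) (E n₂))) p :=
    ((hB.differentiable (by simp) p.2).hasFDerivAt).comp p hasFDerivAt_snd
  have hΦd := (((hf2c.mul hf2c).mul hAc).add ((hf1c.mul hf1c).mul hBc))
  have hdd : dd (sumVF ζ₁ ζ₂)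
      (fun q : E n₁ × E n₂ => dwg g₁ g₂ f₁ f₂ q (sumVF V₁ V₂ q) (sumVF V₁ V₂ q)) p
      = (f₂ p.2 * f₂ p.2) * fderiv ℝ A p.1 (ζ₁ p.1)
        + 2 * f₂ p.2 * fderiv ℝ f₂ p.2 (ζ₂ p.2) * A p.1
        + (f₁ p.1 * f₁ p.1) * fderiv ℝ B p.2 (ζ₂ p.2)
        + 2 * f₁ p.1 * fderiv ℝ f₁ p.1 (ζ₁ p.1) * B p.2 := by
    rw [dd, hΦeq, HasFDerivAt.fderiv (f := fun q : E n₁ × E n₂ =>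
      f₂ q.2 * f₂ q.2 * A q.1 + f₁ q.1 * f₁ q.1 * B q.2) hΦd]
    simp [sumVF, ContinuousLinearMap.add_apply, ContinuousLinearMap.smul_apply,
      ContinuousLinearMap.comp_apply]
    ring
  -- expand the Lie derivative of the warped metric
  have hlie : lieD (dwg g₁ g₂ f₁ f₂) (sumVF ζ₁ ζ₂) (sumVF V₁ V₂) (sumVF V₁ V₂) p
      = (f₂ p.2 * f₂ p.2) * fderiv ℝ A p.1 (ζ₁ p.1)
        + 2 * f₂ p.2 * fderiv ℝ f₂ p.2 (ζ₂ p.2) * A p.1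
        + (f₁ p.1 * f₁ p.1) * fderiv ℝ B p.2 (ζ₂ p.2)
        + 2 * f₁ p.1 * fderiv ℝ f₁ p.1 (ζ₁ p.1) * B p.2
        - 2 * ((f₂ p.2)^2 * g₁ p.1 (br ζ₁ V₁ p.1) (V₁ p.1)
          + (f₁ p.1)^2 * g₂ p.2 (br ζ₂ V₂ p.2) (V₂ p.2)) := by
    rw [lieD, hdd, hbr]
    simp only [dwg, sumVF]
    rw [hg₁.symm p.1 (V₁ p.1) (br ζ₁ V₁ p.1), hg₂.symm p.2 (V₂ p.2) (br ζ₂ V₂ p.2)]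
    ring
  -- the two factor identities
  have e1 := lc_lie hg₁ hD₁ hζ₁ hV₁ p.1
  have e2 := lc_lie hg₂ hD₂ hζ₂ hV₂ p.2
  simp only [lieD, dd, ← hAdef, ← hBdef] at e1 e2
  rw [hg₁.symm p.1 (V₁ p.1) (br ζ₁ V₁ p.1)] at e1
  rw [hg₂.symm p.2 (V₂ p.2) (br ζ₂ V₂ p.2)] at e2
  have hA0 : A p.1 = g₁ p.1 (V₁ p.1) (V₁ p.1) := rfl
  have hB0 : B p.2 = g₂ p.2 (V₂ p.2) (V₂ p.2) := rfl
  rw [← hmain, hlie, ← hA0, ← hB0]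
  linear_combination (-(f₂ p.2)^2) * e1 + (-(f₁ p.1)^2) * e2
end
end
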